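/- For every integer n ≥ 0, A(n) regarded as a k-module via the right unit π_n ∘ η_R (action h · x := π_n(η_R(h))·x) is free with basis the same monomials τ^E ξ^R with e_s ∈ {0,1} for 0 ≤ s ≤ n and 0 ≤ r_s < 2^{n+1−s} for 1 ≤ s ≤ n. (Paper's Lemma 'right H-basis of A(n)_{∗,∗}', case ℓ = 2.) -/

import Mathlib

open MvPolynomial TensorProduct

noncomputable section

/-- Variables of the dual motivic Steenrod algebra: `.inl i` is `τᵢ`, `.inr i` is `ξ_{i+1}`. -/
abbrev MotVar : Type := ℕ ⊕ ℕ

variable (k : Type) [CommRing k]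

/-- `τᵢ` as a polynomial generator. -/
def tP (i : ℕ) : MvPolynomial MotVar k := X (Sum.inl i)

/-- `ξᵢ` as a polynomial generator, with the convention `ξ₀ = 1`. -/
def xP : ℕ → MvPolynomial MotVar k
  | 0 => 1
  | i + 1 => X (Sum.inr i)

variable (τ ρ : k)

/-- The ideal of defining relations `τᵢ² = τ·ξ_{i+1} + ρ·τ_{i+1} + ρ·τ₀·ξ_{i+1}`. -/
def relIdeal : Ideal (MvPolynomial MotVar k) :=
  Ideal.span (Set.range fun i : ℕ =>
    tP k i ^ 2 - (C τ * xP k (i + 1) + C ρ * tP k (i + 1) + C ρ * tP k 0 * xP k (i + 1)))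

/-- The mod 2 dual motivic Steenrod algebra over `k` (with `H_{*,*}` replaced by `k`). -/
abbrev DSA : Type := MvPolynomial MotVar k ⧸ relIdeal k τ ρ

/-- The canonical projection onto the dual Steenrod algebra. -/
def mkDSA : MvPolynomial MotVar k →+* DSA k τ ρ := Ideal.Quotient.mk _

/-- The monomial `τ^E ξ^R`, where `R i` records the exponent `r_{i+1}` of `ξ_{i+1}`. -/
def monP (E R : ℕ →₀ ℕ) : MvPolynomial MotVar k :=
  (E.prod fun i e => tP k i ^ e) * (R.prod fun i r => xP k (i + 1) ^ r)

/-- The ideal `I(n) ⊆ 𝒜`, generated by the `τ_m` with `m ≥ n+1` and the `ξᵢ^{2^j}`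
with `i ≥ 1`, `j ≥ 0`, `i + j ≥ n+1`. -/
def Iideal (n : ℤ) : Ideal (DSA k τ ρ) :=
  Ideal.span ({x | ∃ m : ℕ, n + 1 ≤ (m : ℤ) ∧ x = mkDSA k τ ρ (tP k m)} ∪
    {x | ∃ i j : ℕ, 1 ≤ i ∧ n + 1 ≤ (i : ℤ) + (j : ℤ) ∧ x = mkDSA k τ ρ (xP k i ^ 2 ^ j)})

/-- The quotient `A(n) = 𝒜/I(n)`. -/
abbrev An (n : ℤ) : Type := DSA k τ ρ ⧸ Iideal k τ ρ n

/-- `k = F₂[τ, ρ]`, the mod 2 motivic cohomology ring of the base in the paper's model. -/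
abbrev kk : Type := MvPolynomial (Fin 2) (ZMod 2)

/-- The element `τ ∈ k`. -/
def τ₂ : kk := X 0

/-- The element `ρ ∈ k`. -/
def ρ₂ : kk := X 1

/-- The index set for the monomial basis of `A(n)` (see Statement 3). -/
def IdxA (n : ℕ) : Type :=
  {p : (ℕ →₀ ℕ) × (ℕ →₀ ℕ) //
    (∀ s, p.1 s ≤ 1) ∧ (∀ s, n < s → p.1 s = 0) ∧ (∀ i, p.2 i < 2 ^ (n - i))}

/-!
Rewriting `τᵢ² ↦ τ·ξ_{i+1} + ρ·τ_{i+1} + ρ·τ₀·ξ_{i+1}` and discarding the monomials that lie in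
`I(n)` reduces every polynomial to a `k`-combination of basis monomials, over any commutative
ring `k` and for any `τ, ρ`. The rewriting is confluent: writing `rᵢ` for the right-hand side
above, the two ways of reducing `X^a·τᵢ²·τⱼ²` both end at the reduction of `X^a·rᵢ·rⱼ`, by
induction on the degree in the `τ`'s. Hence the normal form vanishes on the kernel of
`k[τ, ξ] → A(n)`, and the basis monomials form a basis of `A(n)` for the left unit.

For the right unit, `η_R(h) ≡ h` modulo polynomials without constant term. Writing
`Σ τ^E ξ^R · η_R(h_{E,R})` in the left basis is therefore an additive endomorphism `1 + U` of
the coefficient module, where `U` strictly raises the weight `τᵢ ↦ 2^i`, `ξ_{i+1} ↦ 2^{i+1}`,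
which the rewriting never lowers. There are finitely many basis monomials, so `U` is nilpotent
and `1 + U` is bijective.
-/

def LinearMap.kerIdeal {R A M : Type*} [CommSemiring R] [CommSemiring A] [Algebra R A]
    [AddCommMonoid M] [Module R M] (L : A →ₗ[R] M) : Ideal A where
  carrier := {x | ∀ a, L (a * x) = 0}
  add_mem' hx hy a := by simp only [mul_add, map_add, hx a, hy a, add_zero]
  zero_mem' a := by simp
  smul_mem' c x hx a := by simpa [mul_assoc] using hx (a * c)

theorem AddMonoid.End.bijective_of_isNilpotent_sub_one {M : Type*} [AddCommGroup M]
    {f : AddMonoid.End M} (hf : IsNilpotent (f - 1)) : Function.Bijective f := by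
  obtain ⟨u, rfl⟩ := sub_add_cancel f 1 ▸ hf.isUnit_add_one
  exact ⟨Function.LeftInverse.injective (g := ⇑(↑u⁻¹ : AddMonoid.End M))
      fun x => DFunLike.congr_fun u.inv_mul x,
    Function.RightInverse.surjective (g := ⇑(↑u⁻¹ : AddMonoid.End M))
      fun x => DFunLike.congr_fun u.mul_inv x⟩

namespace DualSteenrod

open Finsupp (single)
open scoped Pointwise

variable {k} {n : ℕ}

def tauDegree : (MotVar →₀ ℕ) →+ ℕ := Finsupp.weight (Sum.elim 1 0)

/-- No term on the right of `τᵢ² = τ·ξ_{i+1} + ρ·τ_{i+1} + ρ·τ₀·ξ_{i+1}` has lower weight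
than `τᵢ²`. -/
def motWeight : (MotVar →₀ ℕ) →+ ℕ :=
  Finsupp.weight (Sum.elim (fun i => 2 ^ i) (fun i => 2 ^ (i + 1)))

@[simp] lemma tauDegree_single_inl (i e : ℕ) : tauDegree (single (.inl i : MotVar) e) = e := by
  simp [tauDegree, Finsupp.weight_single]

@[simp] lemma tauDegree_single_inr (i e : ℕ) : tauDegree (single (.inr i : MotVar) e) = 0 := by
  simp [tauDegree, Finsupp.weight_single]

@[simp] lemma motWeight_single_inl (i e : ℕ) :
    motWeight (single (.inl i : MotVar) e) = e * 2 ^ i := by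
  simp [motWeight, Finsupp.weight_single]

@[simp] lemma motWeight_single_inr (i e : ℕ) :
    motWeight (single (.inr i : MotVar) e) = e * 2 ^ (i + 1) := by
  simp [motWeight, Finsupp.weight_single]

lemma tauDegree_sub_tau_sq {m : MotVar →₀ ℕ} {i : ℕ} (h : 2 ≤ m (.inl i)) :
    tauDegree (m - single (.inl i) 2) + 2 = tauDegree m := by
  conv_rhs => rw [← tsub_add_cancel_of_le (Finsupp.single_le_iff.mpr h)]
  rw [map_add, tauDegree_single_inl]

lemma motWeight_pos {u : MotVar →₀ ℕ} (hu : u ≠ 0) : 0 < motWeight u := by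
  obtain ⟨v, hv⟩ := Finsupp.ne_iff.mp hu
  refine lt_of_lt_of_le ?_ (Finsupp.le_weight_of_ne_zero' _ hv)
  cases v <;> simp

/-- `X^m` is divisible by a monomial generator of `I(n)`: by some `τᵢ` with `n < i`, or by
`ξ_{i+1}^{2^(n-i)}`, which is `ξ_{i+1}` itself when `n ≤ i` since `n - i = 0` in `ℕ`. -/
def IsKilled (n : ℕ) (m : MotVar →₀ ℕ) : Prop :=
  (∃ i, n < i ∧ m (.inl i) ≠ 0) ∨ ∃ i, 2 ^ (n - i) ≤ m (.inr i)

lemma IsKilled.mono {m m' : MotVar →₀ ℕ} (h : IsKilled n m) (hm : m ≤ m') : IsKilled n m' := by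
  rcases h with ⟨i, hi, hm0⟩ | ⟨i, hi⟩
  · exact .inl ⟨i, hi, fun h0 => hm0 (Nat.eq_zero_of_le_zero (h0 ▸ hm _))⟩
  · exact .inr ⟨i, hi.trans (hm _)⟩

lemma IsKilled.of_add_tau_sq {m : MotVar →₀ ℕ} {i : ℕ}
    (h : IsKilled n (m + single (.inl i) 2)) :
    IsKilled n (m + single (.inr i) 1) ∧ IsKilled n (m + single (.inl (i + 1)) 1) := by
  by_cases hi : n < i
  · exact ⟨.inr ⟨i, by simp [Nat.sub_eq_zero_of_le hi.le]⟩, .inl ⟨i + 1, by omega, by simp⟩⟩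
  have hm : IsKilled n m := by
    rcases h with ⟨j, hj, hj0⟩ | ⟨j, hj⟩
    · exact .inl ⟨j, hj, by simpa [Finsupp.single_apply, show i ≠ j by omega] using hj0⟩
    · exact .inr ⟨j, by simpa using hj⟩
  exact ⟨hm.mono le_self_add, hm.mono le_self_add⟩

def _root_.IdxA.exp (p : IdxA n) : MotVar →₀ ℕ := Finsupp.sumFinsuppEquivProdFinsupp.symm p.1

@[simp] lemma _root_.IdxA.exp_inl (p : IdxA n) (i : ℕ) : p.exp (.inl i) = p.1.1 i := by
  simp [IdxA.exp]

@[simp] lemma _root_.IdxA.exp_inr (p : IdxA n) (i : ℕ) : p.exp (.inr i) = p.1.2 i := by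
  simp [IdxA.exp]

lemma _root_.IdxA.exp_injective : Function.Injective (IdxA.exp (n := n)) :=
  fun _ _ h => Subtype.ext (Finsupp.sumFinsuppEquivProdFinsupp.symm.injective h)

lemma _root_.IdxA.not_isKilled_exp (p : IdxA n) : ¬IsKilled n p.exp := by
  obtain ⟨-, h₂, h₃⟩ := p.2
  rintro (⟨i, hi, h0⟩ | ⟨i, hi⟩)
  · exact h0 (by simpa using h₂ i hi)
  · exact absurd (h₃ i) (by simpa using hi)

def _root_.IdxA.ofExp (m : MotVar →₀ ℕ) (hsq : ∀ i, m (.inl i) < 2) (hk : ¬IsKilled n m) :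
    IdxA n :=
  ⟨Finsupp.sumFinsuppEquivProdFinsupp m, fun s => by simpa using Nat.lt_succ_iff.mp (hsq s),
    fun s hs => by simpa using not_not.mp fun h => hk (.inl ⟨s, hs, h⟩),
    fun i => by simpa using not_le.mp fun h => hk (.inr ⟨i, h⟩)⟩

@[simp] lemma _root_.IdxA.exp_ofExp (m : MotVar →₀ ℕ) (hsq : ∀ i, m (.inl i) < 2)
    (hk : ¬IsKilled n m) : (IdxA.ofExp m hsq hk).exp = m :=
  Finsupp.sumFinsuppEquivProdFinsupp.symm_apply_apply m

lemma isKilled_or_exists_tau_sq_or_exp (m : MotVar →₀ ℕ) :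
    IsKilled n m ∨ (∃ m' i, m = m' + single (.inl i) 2) ∨ ∃ p : IdxA n, p.exp = m := by
  by_cases hk : IsKilled n m
  · exact .inl hk
  by_cases hsq : ∃ i, 2 ≤ m (.inl i)
  · obtain ⟨i, hi⟩ := hsq
    exact .inr (.inl ⟨m - single (.inl i) 2, i,
      (tsub_add_cancel_of_le (Finsupp.single_le_iff.mpr hi)).symm⟩)
  · push Not at hsq
    exact .inr (.inr ⟨.ofExp m hsq hk, IdxA.exp_ofExp m hsq hk⟩)

instance _root_.IdxA.finite (n : ℕ) : Finite (IdxA n) := by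
  let S : Finset ((ℕ →₀ ℕ) × (ℕ →₀ ℕ)) :=
    (Finset.range (n + 1)).finsupp (fun _ => Finset.range 2) ×ˢ
      (Finset.range n).finsupp (fun i => Finset.range (2 ^ (n - i)))
  refine Finite.of_injective (β := S) (fun p => ⟨p.1, ?_⟩)
    fun p q h => Subtype.ext (by simpa using h)
  obtain ⟨h₁, h₂, h₃⟩ := p.2
  simp only [S, Finset.mem_product, Finset.mem_finsupp_iff, Finset.mem_range]
  refine ⟨⟨fun s hs => ?_, fun s _ => Nat.lt_succ_of_le (h₁ s)⟩, ⟨fun i hi => ?_, fun i _ => h₃ i⟩⟩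
  · exact Finset.mem_range.mpr (not_le.mp fun h => Finsupp.mem_support_iff.mp hs (h₂ s h))
  · refine Finset.mem_range.mpr (not_le.mp fun h => Finsupp.mem_support_iff.mp hi ?_)
    simpa [Nat.sub_eq_zero_of_le h] using h₃ i

variable (k) in
def tauSqRHS (i : ℕ) : MvPolynomial MotVar k :=
  C τ * xP k (i + 1) + C ρ * tP k (i + 1) + C ρ * tP k 0 * xP k (i + 1)

variable {τ ρ}

lemma monomial_smul_one (m : MotVar →₀ ℕ) (c : k) : c • monomial m 1 = monomial m c := by
  rw [smul_monomial, smul_eq_mul, mul_one]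

lemma monomial_add_tau_sq (m : MotVar →₀ ℕ) (i : ℕ) :
    monomial (m + single (.inl i) 2) (1 : k) = monomial m 1 * tP k i ^ 2 := by
  rw [tP, X_pow_eq_monomial, monomial_mul, one_mul]

lemma monomial_mul_tauSqRHS (m : MotVar →₀ ℕ) (i : ℕ) :
    monomial m 1 * tauSqRHS k τ ρ i =
      τ • monomial (m + single (.inr i) 1) 1 + ρ • monomial (m + single (.inl (i + 1)) 1) 1 +
        ρ • monomial (m + single (.inl 0) 1 + single (.inr i) 1) 1 := by
  simp only [tauSqRHS, tP, xP, X, C_mul_monomial, monomial_mul, mul_add, smul_monomial,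
    add_assoc, one_mul, mul_one, smul_eq_mul]

lemma monomial_mul_tauSqRHS_mem {Q : Submodule k (MvPolynomial MotVar k)} {m : MotVar →₀ ℕ}
    {i : ℕ} (h : ∀ a, tauDegree a ≤ tauDegree m + 1 →
      motWeight (m + single (.inl i) 2) ≤ motWeight a → monomial a 1 ∈ Q) :
    monomial m 1 * tauSqRHS k τ ρ i ∈ Q := by
  rw [monomial_mul_tauSqRHS]
  refine add_mem (add_mem (Q.smul_mem _ (h _ ?_ ?_)) (Q.smul_mem _ (h _ ?_ ?_)))
    (Q.smul_mem _ (h _ ?_ ?_)) <;> simp [pow_succ] <;> omega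

variable (τ ρ) in
open Classical in
/-- Reduces the `τᵢ²` with the least `i` first; by `nfMonomial_add_tau_sq` the choice does not
matter. -/
def nfMonomial (n : ℕ) (m : MotVar →₀ ℕ) : IdxA n →₀ k :=
  if hk : IsKilled n m then 0
  else if h : ∃ i, 2 ≤ m (.inl i) then
    let i := Nat.find h
    let m' := m - single (.inl i) 2
    τ • nfMonomial n (m' + single (.inr i) 1) + ρ • nfMonomial n (m' + single (.inl (i + 1)) 1) +
      ρ • nfMonomial n (m' + single (.inl 0) 1 + single (.inr i) 1)
  else single (.ofExp m (by simpa using h) hk) 1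
termination_by tauDegree m
decreasing_by
  all_goals
    have := tauDegree_sub_tau_sq (Nat.find_spec h)
    simp only [map_add, tauDegree_single_inl, tauDegree_single_inr]
    omega

variable (τ ρ n) in
def nf : MvPolynomial MotVar k →ₗ[k] IdxA n →₀ k :=
  (basisMonomials MotVar k).constr k (nfMonomial τ ρ n)

lemma nf_monomial (m : MotVar →₀ ℕ) (c : k) :
    nf τ ρ n (monomial m c) = c • nfMonomial τ ρ n m := by
  rw [← monomial_smul_one, map_smul, ← congrFun (coe_basisMonomials MotVar k) m, nf,
    Module.Basis.constr_basis]

lemma nfMonomial_of_isKilled {m : MotVar →₀ ℕ} (h : IsKilled n m) : nfMonomial τ ρ n m = 0 := by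
  rw [nfMonomial, dif_pos h]

lemma nfMonomial_exp (p : IdxA n) : nfMonomial τ ρ n p.exp = single p 1 := by
  have hsq : ¬∃ i, 2 ≤ p.exp (.inl i) := fun ⟨i, hi⟩ => by
    have := p.2.1 i
    simp only [IdxA.exp_inl] at hi
    omega
  rw [nfMonomial, dif_neg p.not_isKilled_exp, dif_neg hsq]
  exact congrArg (single · 1) (IdxA.exp_injective (IdxA.exp_ofExp _ _ _))

lemma nf_monomial_mul_tauSqRHS (m : MotVar →₀ ℕ) (i : ℕ) :
    nf τ ρ n (monomial m 1 * tauSqRHS k τ ρ i) =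
      τ • nfMonomial τ ρ n (m + single (.inr i) 1) +
        ρ • nfMonomial τ ρ n (m + single (.inl (i + 1)) 1) +
        ρ • nfMonomial τ ρ n (m + single (.inl 0) 1 + single (.inr i) 1) := by
  simp only [monomial_mul_tauSqRHS, map_add, map_smul, nf_monomial, one_smul]

lemma nf_monomial_mul_tauSqRHS_comm {a : MotVar →₀ ℕ} (i j : ℕ)
    (ih : ∀ b i, tauDegree b ≤ tauDegree a + 1 →
      nfMonomial τ ρ n (b + single (.inl i) 2) = nf τ ρ n (monomial b 1 * tauSqRHS k τ ρ i)) :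
    nf τ ρ n (monomial (a + single (.inl i) 2) 1 * tauSqRHS k τ ρ j) =
      nf τ ρ n (monomial (a + single (.inl j) 2) 1 * tauSqRHS k τ ρ i) := by
  have reduce (i j : ℕ) : nf τ ρ n (monomial a 1 * tauSqRHS k τ ρ j * tP k i ^ 2) =
      nf τ ρ n (monomial a 1 * tauSqRHS k τ ρ j * tauSqRHS k τ ρ i) := by
    have := monomial_mul_tauSqRHS_mem (τ := τ) (ρ := ρ) (m := a) (i := j) (Q := LinearMap.ker
      (nf τ ρ n ∘ₗ LinearMap.mulRight k (tP k i ^ 2 - tauSqRHS k τ ρ i))) fun b hb _ => by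
        simp [mul_sub, ← monomial_add_tau_sq, nf_monomial, ih b i hb]
    simpa [mul_sub, sub_eq_zero] using this
  calc nf τ ρ n (monomial (a + single (.inl i) 2) 1 * tauSqRHS k τ ρ j)
      = nf τ ρ n (monomial a 1 * tauSqRHS k τ ρ j * tP k i ^ 2) := by
        rw [monomial_add_tau_sq, mul_right_comm]
    _ = nf τ ρ n (monomial a 1 * tauSqRHS k τ ρ i * tauSqRHS k τ ρ j) := by
        rw [reduce, mul_right_comm]
    _ = nf τ ρ n (monomial (a + single (.inl j) 2) 1 * tauSqRHS k τ ρ i) := by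
        rw [← reduce, monomial_add_tau_sq, mul_right_comm]

theorem nfMonomial_add_tau_sq (m : MotVar →₀ ℕ) (i : ℕ) :
    nfMonomial τ ρ n (m + single (.inl i) 2) = nf τ ρ n (monomial m 1 * tauSqRHS k τ ρ i) := by
  induction hd : tauDegree m using Nat.strong_induction_on generalizing m i with
  | _ d ih =>
  rw [nfMonomial]
  split_ifs with hk hsq
  · obtain ⟨h₁, h₂⟩ := hk.of_add_tau_sq
    rw [nf_monomial_mul_tauSqRHS, nfMonomial_of_isKilled h₁, nfMonomial_of_isKilled h₂,
      nfMonomial_of_isKilled (h₁.mono (by rw [add_right_comm]; exact le_self_add))]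
    simp
  · rw [← nf_monomial_mul_tauSqRHS]
    obtain ⟨j, hj⟩ : ∃ j, Nat.find hsq = j := ⟨_, rfl⟩
    have hjsq := Nat.find_spec hsq
    simp only [hj] at hjsq ⊢
    rcases eq_or_ne j i with rfl | hji
    · rw [add_tsub_cancel_right]
    have h₂ : 2 ≤ m (.inl j) := by simpa [Finsupp.single_apply, hji.symm] using hjsq
    obtain ⟨a, rfl⟩ : ∃ a, m = a + single (.inl j) 2 :=
      ⟨_, (tsub_add_cancel_of_le (Finsupp.single_le_iff.mpr h₂)).symm⟩
    rw [add_right_comm, add_tsub_cancel_right]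
    refine nf_monomial_mul_tauSqRHS_comm i j fun b i hb => ih _ ?_ b i rfl
    simp only [← hd, map_add, tauDegree_single_inl] at hb ⊢
    omega
  · exact absurd ⟨i, by simp⟩ hsq

theorem nf_mul_tP_sq (f : MvPolynomial MotVar k) (i : ℕ) :
    nf τ ρ n (f * tP k i ^ 2) = nf τ ρ n (f * tauSqRHS k τ ρ i) := by
  induction f using MvPolynomial.induction_on' with
  | monomial m c =>
    rw [← monomial_smul_one, smul_mul_assoc, smul_mul_assoc, map_smul, map_smul,
      ← monomial_add_tau_sq, nf_monomial, one_smul, nfMonomial_add_tau_sq]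
  | add p q hp hq => rw [add_mul, add_mul, map_add, map_add, hp, hq]

theorem nfMonomial_mem_supported (m : MotVar →₀ ℕ) :
    nfMonomial τ ρ n m ∈ Finsupp.supported k k {p | motWeight m ≤ motWeight p.exp} := by
  induction hd : tauDegree m using Nat.strong_induction_on generalizing m with
  | _ d ih =>
  rcases isKilled_or_exists_tau_sq_or_exp (n := n) m with hk | ⟨m', i, rfl⟩ | ⟨p, rfl⟩
  · rw [nfMonomial_of_isKilled hk]
    exact zero_mem _
  · rw [nfMonomial_add_tau_sq]
    refine monomial_mul_tauSqRHS_mem (Q := (Finsupp.supported k k _).comap (nf τ ρ n))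
      fun a ha hwa => ?_
    rw [Submodule.mem_comap, nf_monomial, one_smul]
    refine Finsupp.supported_mono (fun p hp => hwa.trans hp) (ih _ ?_ a rfl)
    simp only [← hd, map_add, tauDegree_single_inl] at ha ⊢
    omega
  · rw [nfMonomial_exp]
    exact Finsupp.single_mem_supported k _ (Set.mem_ofPred.mpr le_rfl)

lemma nf_mem_supported {f : MvPolynomial MotVar k} {w : ℕ}
    (hf : f ∈ restrictSupport k {u | w ≤ motWeight u}) :
    nf τ ρ n f ∈ Finsupp.supported k k {p | w ≤ motWeight p.exp} := by
  have hle : restrictSupport k {u | w ≤ motWeight u} ≤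
      (Finsupp.supported k k {p | w ≤ motWeight p.exp}).comap (nf τ ρ n) := by
    rw [restrictSupport_eq_span, Submodule.span_le]
    rintro _ ⟨u, hu : w ≤ motWeight u, rfl⟩
    rw [SetLike.mem_coe, Submodule.mem_comap, nf_monomial, one_smul]
    have hsub : {p : IdxA n | motWeight u ≤ motWeight p.exp} ⊆ {p | w ≤ motWeight p.exp} :=
      fun p hp => hu.trans hp
    exact Finsupp.supported_mono hsub (nfMonomial_mem_supported (τ := τ) (ρ := ρ) u)
  exact hle hf

lemma monomial_mul_mem_restrictSupport {g : MvPolynomial MotVar k} (hg : constantCoeff g = 0)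
    (m : MotVar →₀ ℕ) :
    monomial m 1 * g ∈ restrictSupport k {u | motWeight m < motWeight u} := by
  have hg' : g ∈ restrictSupport k {u | u ≠ 0} := by
    rintro u hu rfl
    exact mem_support_iff.mp hu (by rwa [← constantCoeff_eq])
  have hm : monomial m (1 : k) ∈ restrictSupport k {m} :=
    (monomial_mem_restrictSupport k).mpr (.inl rfl)
  have := Submodule.mul_mem_mul hm hg'
  rw [← restrictSupport_add] at this
  refine restrictSupport_mono k ?_ this
  rintro _ ⟨_, rfl, u, hu, rfl⟩
  simpa using motWeight_pos hu

lemma tP_sq_sub_mem_kerIdeal (i : ℕ) :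
    tP k i ^ 2 - tauSqRHS k τ ρ i ∈ (nf τ ρ n).kerIdeal := fun a => by
  rw [mul_sub, map_sub, nf_mul_tP_sq, sub_self]

lemma monomial_mem_kerIdeal {g : MotVar →₀ ℕ} (hg : IsKilled n g) :
    monomial g 1 ∈ (nf τ ρ n).kerIdeal := fun a => by
  induction a using MvPolynomial.induction_on' with
  | monomial u c =>
    rw [monomial_mul, mul_one, nf_monomial, nfMonomial_of_isKilled (hg.mono le_add_self),
      smul_zero]
  | add p q hp hq => rw [add_mul, map_add, hp, hq, add_zero]

variable (k τ ρ n) in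
def toAn : MvPolynomial MotVar k →ₐ[k] An k τ ρ n :=
  (Ideal.Quotient.mkₐ k _).comp (Ideal.Quotient.mkₐ k (relIdeal k τ ρ))

lemma toAn_surjective : Function.Surjective (toAn k τ ρ n) :=
  (Ideal.Quotient.mkₐ_surjective k _).comp (Ideal.Quotient.mkₐ_surjective k _)

lemma toAn_tP_sq (i : ℕ) : toAn k τ ρ n (tP k i ^ 2) = toAn k τ ρ n (tauSqRHS k τ ρ i) := by
  rw [← sub_eq_zero, ← map_sub]
  simp only [toAn, AlgHom.comp_apply, Ideal.Quotient.mkₐ_eq_mk]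
  have hrel : tP k i ^ 2 - tauSqRHS k τ ρ i ∈ relIdeal k τ ρ := Ideal.subset_span ⟨i, rfl⟩
  rw [Ideal.Quotient.eq_zero_iff_mem.mpr hrel, map_zero]

lemma toAn_monomial_of_isKilled {m : MotVar →₀ ℕ} (hm : IsKilled n m) :
    toAn k τ ρ n (monomial m 1) = 0 := by
  have of_dvd (g : ℕ) (s : MotVar) (hle : single s g ≤ m)
      (hmem : Ideal.Quotient.mk (relIdeal k τ ρ) (monomial (single s g) 1) ∈ Iideal k τ ρ n) :
      toAn k τ ρ n (monomial m 1) = 0 := by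
    rw [← tsub_add_cancel_of_le hle, ← mul_one (1 : k), ← monomial_mul]
    simp only [toAn, AlgHom.comp_apply, Ideal.Quotient.mkₐ_eq_mk]
    rw [Ideal.Quotient.eq_zero_iff_mem, map_mul]
    exact Ideal.mul_mem_left _ _ hmem
  rcases hm with ⟨i, hi, hm0⟩ | ⟨i, hi⟩
  · exact of_dvd 1 (.inl i) (Finsupp.single_le_iff.mpr (Nat.one_le_iff_ne_zero.mpr hm0))
      (Ideal.subset_span (.inl ⟨i, by omega, rfl⟩))
  · refine of_dvd _ (.inr i) (Finsupp.single_le_iff.mpr hi)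
      (Ideal.subset_span (.inr ⟨i + 1, n - i, by omega, by omega, ?_⟩))
    rw [mkDSA, xP, X_pow_eq_monomial]

lemma ker_toAn_le_kerIdeal : RingHom.ker (toAn k τ ρ n) ≤ (nf τ ρ n).kerIdeal := by
  intro f hf
  have hle : Iideal k τ ρ n ≤ (nf τ ρ n).kerIdeal.map (mkDSA k τ ρ) := by
    refine Ideal.span_le.mpr ?_
    rintro _ (⟨i, hi, rfl⟩ | ⟨_ | i, j, hi, hij, rfl⟩)
    · exact Ideal.mem_map_of_mem _ (monomial_mem_kerIdeal (.inl ⟨i, by omega, by simp⟩))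
    · omega
    · rw [xP, X_pow_eq_monomial]
      refine Ideal.mem_map_of_mem _ (monomial_mem_kerIdeal (.inr ⟨i, ?_⟩))
      simpa using Nat.pow_le_pow_right two_pos (by omega)
  have hrel : relIdeal k τ ρ ≤ (nf τ ρ n).kerIdeal :=
    Ideal.span_le.mpr (Set.range_subset_iff.mpr tP_sq_sub_mem_kerIdeal)
  rw [← Ideal.comap_map_mk hrel]
  exact hle (Ideal.Quotient.eq_zero_iff_mem.mp hf)

variable (k n) in
def monomialSection : (IdxA n →₀ k) →ₗ[k] MvPolynomial MotVar k :=
  Finsupp.linearCombination k fun p => monomial p.exp 1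

lemma monomialSection_single (p : IdxA n) (c : k) :
    monomialSection k n (single p c) = monomial p.exp c := by
  rw [monomialSection, Finsupp.linearCombination_single, monomial_smul_one]

lemma monP_eq_monomial_exp (p : IdxA n) : monP k p.1.1 p.1.2 = monomial p.exp 1 := by
  rw [IdxA.exp, Finsupp.sumFinsuppEquivProdFinsupp_symm_apply, monomial_eq, C_1, one_mul,
    Finsupp.prod_sumElim]
  rfl

lemma nf_monomialSection (h : IdxA n →₀ k) : nf τ ρ n (monomialSection k n h) = h := by
  induction h using Finsupp.induction_linear with
  | zero => simp
  | add a b ha hb => rw [map_add, map_add, ha, hb]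
  | single p c => rw [monomialSection_single, nf_monomial, nfMonomial_exp, Finsupp.smul_single_one]

theorem toAn_monomialSection_nf (f : MvPolynomial MotVar k) :
    toAn k τ ρ n (monomialSection k n (nf τ ρ n f)) = toAn k τ ρ n f := by
  suffices h : ∀ m, toAn k τ ρ n (monomialSection k n (nfMonomial τ ρ n m)) =
      toAn k τ ρ n (monomial m 1) by
    induction f using MvPolynomial.induction_on' with
    | monomial m c =>
      rw [← monomial_smul_one]
      simp only [map_smul, nf_monomial, one_smul, h]
    | add p q hp hq => simp only [map_add, hp, hq]
  intro m
  induction hd : tauDegree m using Nat.strong_induction_on generalizing m with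
  | _ d ih =>
  rcases isKilled_or_exists_tau_sq_or_exp (n := n) m with hk | ⟨m', i, rfl⟩ | ⟨p, rfl⟩
  · rw [nfMonomial_of_isKilled hk, map_zero, map_zero, toAn_monomial_of_isKilled hk]
  · rw [nfMonomial_add_tau_sq, monomial_add_tau_sq, map_mul (toAn k τ ρ n), toAn_tP_sq,
      ← map_mul]
    refine sub_eq_zero.mp (monomial_mul_tauSqRHS_mem (Q := LinearMap.ker
      ((toAn k τ ρ n).toLinearMap ∘ₗ monomialSection k n ∘ₗ nf τ ρ n - (toAn k τ ρ n).toLinearMap))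
      fun a ha _ => ?_)
    have := ih _ (by simp only [← hd, map_add, tauDegree_single_inl] at ha ⊢; omega) a rfl
    simp [nf_monomial, this]
  · rw [nfMonomial_exp, monomialSection_single]

theorem toAn_comp_monomialSection_bijective :
    Function.Bijective (toAn k τ ρ n ∘ monomialSection k n) := by
  refine ⟨fun h h' hh => ?_, fun x => ?_⟩
  · have hmem : monomialSection k n h - monomialSection k n h' ∈ RingHom.ker (toAn k τ ρ n) := by
      simpa [RingHom.mem_ker, sub_eq_zero] using hh
    simpa [sub_eq_zero, nf_monomialSection] using ker_toAn_le_kerIdeal (τ := τ) (ρ := ρ) hmem 1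
  · obtain ⟨f, rfl⟩ := toAn_surjective x
    exact ⟨nf τ ρ n f, toAn_monomialSection_nf f⟩

section Twist

variable (η : k →+ MvPolynomial MotVar k)

variable (n) in
def twist : (IdxA n →₀ k) →+ MvPolynomial MotVar k :=
  Finsupp.liftAddHom fun p => (AddMonoidHom.mulLeft (monomial p.exp 1)).comp η

lemma twist_apply (h : IdxA n →₀ k) : twist n η h = h.sum fun p c => monomial p.exp 1 * η c :=
  Finsupp.liftAddHom_apply _ _

variable (τ ρ n) in
def twistedNF : AddMonoid.End (IdxA n →₀ k) := (nf τ ρ n).toAddMonoidHom.comp (twist n η)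

lemma twistedNF_sub_one_apply (h : IdxA n →₀ k) :
    (twistedNF τ ρ n η - 1) h = nf τ ρ n (h.sum fun p c => monomial p.exp 1 * (η c - C c)) := by
  change nf τ ρ n (twist n η h) - h = _
  conv_lhs => enter [2]; rw [← nf_monomialSection (τ := τ) (ρ := ρ) h]
  rw [← map_sub, twist_apply, monomialSection, Finsupp.linearCombination_apply,
    ← Finsupp.sum_sub]
  refine congrArg _ (Finsupp.sum_congr fun p _ => ?_)
  rw [mul_sub, smul_eq_C_mul, mul_comm (C (h p))]

lemma twistedNF_sub_one_mem_supported (hη : ∀ c, constantCoeff (η c) = c) {h : IdxA n →₀ k}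
    {w : ℕ} (hh : h ∈ Finsupp.supported k k {p | w ≤ motWeight p.exp}) :
    (twistedNF τ ρ n η - 1) h ∈ Finsupp.supported k k {p | w + 1 ≤ motWeight p.exp} := by
  rw [twistedNF_sub_one_apply]
  refine nf_mem_supported (Submodule.sum_mem _ fun p hp => ?_)
  exact restrictSupport_mono k (fun u (hu : motWeight p.exp < motWeight u) => (hh hp).trans_lt hu)
    (monomial_mul_mem_restrictSupport (by simp [hη]) p.exp)

theorem isNilpotent_twistedNF_sub_one (hη : ∀ c, constantCoeff (η c) = c) :
    IsNilpotent (twistedNF τ ρ n η - 1) := by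
  obtain ⟨B, hB⟩ := (Set.finite_range fun p : IdxA n => motWeight p.exp).bddAbove
  have hpow : ∀ j h, (⇑(twistedNF τ ρ n η - 1))^[j] h ∈
      Finsupp.supported k k {p | j ≤ motWeight p.exp} := by
    intro j h
    induction j with
    | zero => exact fun p _ => Nat.zero_le _
    | succ j ih =>
      rw [Function.iterate_succ_apply']
      exact twistedNF_sub_one_mem_supported η hη ih
  have hempty : {p : IdxA n | B + 1 ≤ motWeight p.exp} = ∅ :=
    Set.eq_empty_of_forall_notMem fun p hp => by
      have : motWeight p.exp ≤ B := hB ⟨p, rfl⟩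
      exact absurd (show B + 1 ≤ motWeight p.exp from hp) (by omega)
  refine ⟨B + 1, AddMonoid.End.ext _ fun h => ?_⟩
  have := hpow (B + 1) h
  rwa [hempty, Finsupp.supported_empty, Submodule.mem_bot, ← AddMonoid.End.coe_pow] at this

theorem toAn_comp_twist_bijective (hη : ∀ c, constantCoeff (η c) = c) :
    Function.Bijective (toAn k τ ρ n ∘ twist n η) := by
  have : toAn k τ ρ n ∘ twist n η = (toAn k τ ρ n ∘ monomialSection k n) ∘ twistedNF τ ρ n η :=
    funext fun h => (toAn_monomialSection_nf _).symm
  rw [this]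
  exact toAn_comp_monomialSection_bijective.comp
    (AddMonoid.End.bijective_of_isNilpotent_sub_one (isNilpotent_twistedNF_sub_one η hη))

end Twist

def rightUnitLift : kk →ₐ[ZMod 2] MvPolynomial MotVar kk :=
  aeval ![C τ₂ + C ρ₂ * tP kk 0, C ρ₂]

lemma constantCoeff_rightUnitLift (c : kk) : constantCoeff (rightUnitLift c) = c := by
  have : (constantCoeff : MvPolynomial MotVar kk →+* kk).comp rightUnitLift.toRingHom =
      RingHom.id kk :=
    ringHom_ext' (RingHom.ext_zmod _ _) fun i => by fin_cases i <;> simp [rightUnitLift, tP, τ₂, ρ₂]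
  exact DFunLike.congr_fun this c

lemma eq_mkₐ_comp_rightUnitLift (ηR : kk →ₐ[ZMod 2] DSA kk τ₂ ρ₂)
    (hτ : ηR τ₂ = algebraMap kk (DSA kk τ₂ ρ₂) τ₂ +
      algebraMap kk (DSA kk τ₂ ρ₂) ρ₂ * mkDSA kk τ₂ ρ₂ (tP kk 0))
    (hρ : ηR ρ₂ = algebraMap kk (DSA kk τ₂ ρ₂) ρ₂) :
    ηR = (Ideal.Quotient.mkₐ (ZMod 2) (relIdeal kk τ₂ ρ₂)).comp rightUnitLift := by
  have hC (c : kk) : algebraMap kk (DSA kk τ₂ ρ₂) c = mkDSA kk τ₂ ρ₂ (C c) :=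
    (Ideal.Quotient.mk_algebraMap _ _ _).symm
  refine algHom_ext fun i => ?_
  fin_cases i
  · change ηR τ₂ = mkDSA kk τ₂ ρ₂ (rightUnitLift (X 0))
    simp [rightUnitLift, hτ, hC]
  · change ηR ρ₂ = mkDSA kk τ₂ ρ₂ (rightUnitLift (X 1))
    simp [rightUnitLift, hρ, hC]

end DualSteenrod

open DualSteenrod in
/-- For every `n ≥ 0`, `A(n)` regarded as a `k`-module via the right
unit `π_n ∘ η_R` is free with basis the monomials `τ^E ξ^R` with `e_s ∈ {0,1}` for
`0 ≤ s ≤ n` and `0 ≤ r_s < 2^{n+1-s}` for `1 ≤ s ≤ n`: every element of `A(n)` is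
uniquely a finite sum `Σ τ^E ξ^R · π_n(η_R(h_{E,R}))`. -/
theorem statement4 (ηR : kk →ₐ[ZMod 2] DSA kk τ₂ ρ₂)
    (hτ : ηR τ₂ = algebraMap kk (DSA kk τ₂ ρ₂) τ₂ +
      algebraMap kk (DSA kk τ₂ ρ₂) ρ₂ * mkDSA kk τ₂ ρ₂ (tP kk 0))
    (hρ : ηR ρ₂ = algebraMap kk (DSA kk τ₂ ρ₂) ρ₂) (n : ℕ) :
    Function.Bijective
      (fun h : IdxA n →₀ kk =>
        h.sum fun p c =>
          Ideal.Quotient.mk (Iideal kk τ₂ ρ₂ n) (mkDSA kk τ₂ ρ₂ (monP kk p.1.1 p.1.2)) *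
            Ideal.Quotient.mk (Iideal kk τ₂ ρ₂ n) (ηR c)) := by
  have hηR := eq_mkₐ_comp_rightUnitLift ηR hτ hρ
  convert toAn_comp_twist_bijective (τ := τ₂) (ρ := ρ₂) (n := n) rightUnitLift.toAddMonoidHom
    constantCoeff_rightUnitLift using 1
  funext h
  rw [Function.comp_apply, twist_apply, map_finsuppSum]
  refine Finsupp.sum_congr fun p _ => ?_
  rw [hηR, map_mul, monP_eq_monomial_exp]
  rfl

end
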